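/- arXiv:2508.12834 — 2 statements merged into one kernel-verified Lean document; each statement's English description precedes it below -/
import Mathlib

section
/- Let K be a positive integer, let α, b, σ, σ₀, C be positive real numbers, and set β = 2b/(ασ²). Let L : ℝ^K → ℝ be a measurable function such that p_ss(W) = C·exp(−β·L(W)) is a probability density with respect to Lebesgue measure on ℝ^K (i.e. ∫ C·exp(−β·L(W)) dW = 1), and assume that L and W ↦ ‖W‖² are integrable with respect to the probability measure μ_ss with density p_ss. Then (1/K)·∫ L dμ_ss ≤ (ασ²/(2bK))·[ (K/2)·log(2π σ₀²) + log C + (∫ ‖W‖² dμ_ss)/(2σ₀²) ]. -/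
/-!
With `p₀` the Gaussian initialization density, `D(p_ss ‖ p₀) ≥ 0` says
`∫ log p₀ dμ_ss ≤ ∫ log p_ss dμ_ss`. Since `log p_ss = log C - β L` and
`log p₀ W = -(K/2) log (2πσ₀²) - ‖W‖² / (2σ₀²)`, this is the claimed bound multiplied by `β K`.
-/

open MeasureTheory Real Module

section Gibbs

variable {α : Type*} [MeasurableSpace α] {ν : Measure α} {f g : α → ℝ}

theorem integrable_div_withDensity_iff (hf : Measurable f) (hf_pos : ∀ x, 0 < f x) :
    Integrable (fun x => g x / f x) (ν.withDensity fun x => ENNReal.ofReal (f x)) ↔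
      Integrable g ν := by
  rw [integrable_withDensity_iff hf.ennreal_ofReal
    (ae_of_all _ fun _ => ENNReal.ofReal_lt_top)]
  refine integrable_congr (ae_of_all _ fun x => ?_)
  simp only [ENNReal.toReal_ofReal (hf_pos x).le, div_mul_cancel₀ _ (hf_pos x).ne']

theorem integral_div_withDensity (hf : Measurable f) (hf_pos : ∀ x, 0 < f x) (g : α → ℝ) :
    ∫ x, g x / f x ∂(ν.withDensity fun x => ENNReal.ofReal (f x)) = ∫ x, g x ∂ν := by
  rw [integral_withDensity_eq_integral_toReal_smul hf.ennreal_ofReal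
    (ae_of_all _ fun _ => ENNReal.ofReal_lt_top)]
  refine integral_congr_ae (ae_of_all _ fun x => ?_)
  simp only [ENNReal.toReal_ofReal (hf_pos x).le, smul_eq_mul, mul_div_cancel₀ _ (hf_pos x).ne']

/-- Gibbs' inequality, i.e. nonnegativity of the Kullback–Leibler divergence. -/
theorem integral_log_le_integral_log_density (hf : Measurable f) (hf_pos : ∀ x, 0 < f x)
    [IsProbabilityMeasure (ν.withDensity fun x => ENNReal.ofReal (f x))] (hg_pos : ∀ x, 0 < g x)
    (hg : Integrable g ν) (hg_le : ∫ x, g x ∂ν ≤ 1)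
    (hlog_f : Integrable (fun x => log (f x)) (ν.withDensity fun x => ENNReal.ofReal (f x)))
    (hlog_g : Integrable (fun x => log (g x)) (ν.withDensity fun x => ENNReal.ofReal (f x))) :
    ∫ x, log (g x) ∂(ν.withDensity fun x => ENNReal.ofReal (f x)) ≤
      ∫ x, log (f x) ∂(ν.withDensity fun x => ENNReal.ofReal (f x)) := by
  set μ := ν.withDensity fun x => ENNReal.ofReal (f x)
  have hlog_div : ∀ x, log (g x) - log (f x) = log (g x / f x) := fun x =>
    (log_div (hg_pos x).ne' (hf_pos x).ne').symm
  have hratio : Integrable (fun x => g x / f x) μ :=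
    (integrable_div_withDensity_iff hf hf_pos).mpr hg
  rw [← sub_nonpos, ← integral_sub hlog_g hlog_f]
  simp only [hlog_div]
  calc ∫ x, log (g x / f x) ∂μ
      ≤ ∫ x, g x / f x - 1 ∂μ :=
        integral_mono ((hlog_g.sub hlog_f).congr (ae_of_all _ hlog_div))
          (hratio.sub (integrable_const 1))
          fun x => log_le_sub_one_of_pos (div_pos (hg_pos x) (hf_pos x))
    _ = ∫ x, g x ∂ν - 1 := by
        rw [integral_sub hratio (integrable_const 1), integral_div_withDensity hf hf_pos,
          integral_const, probReal_univ, one_smul]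
    _ ≤ 0 := sub_nonpos.mpr hg_le

end Gibbs

section Gaussian

variable {V : Type*} [NormedAddCommGroup V] [InnerProductSpace ℝ V] {s : ℝ}

noncomputable def isotropicGaussianPDF (s : ℝ) (x : V) : ℝ :=
  (2 * π * s ^ 2) ^ (-(finrank ℝ V : ℝ) / 2) * exp (-‖x‖ ^ 2 / (2 * s ^ 2))

theorem isotropicGaussianPDF_pos (hs : s ≠ 0) (x : V) : 0 < isotropicGaussianPDF s x := by
  unfold isotropicGaussianPDF; positivity

theorem log_isotropicGaussianPDF (hs : s ≠ 0) (x : V) :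
    log (isotropicGaussianPDF s x) =
      -(finrank ℝ V / 2) * log (2 * π * s ^ 2) - ‖x‖ ^ 2 / (2 * s ^ 2) := by
  rw [isotropicGaussianPDF, log_mul (by positivity) (exp_pos _).ne', log_exp,
    log_rpow (by positivity)]
  ring

variable [FiniteDimensional ℝ V] [MeasurableSpace V] [BorelSpace V]

theorem integral_isotropicGaussianPDF (hs : s ≠ 0) : ∫ x : V, isotropicGaussianPDF s x = 1 := by
  have hexp : ∀ x : V, exp (-‖x‖ ^ 2 / (2 * s ^ 2)) = exp (-(2 * s ^ 2)⁻¹ * ‖x‖ ^ 2) :=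
    fun x => by ring_nf
  have hvar : π / (2 * s ^ 2)⁻¹ = 2 * π * s ^ 2 := by field_simp
  simp only [isotropicGaussianPDF, hexp, integral_const_mul,
    GaussianFourier.integral_rexp_neg_mul_sq_norm (by positivity : 0 < (2 * s ^ 2)⁻¹), hvar]
  rw [← rpow_add (by positivity), neg_div, neg_add_cancel, rpow_zero]

theorem integrable_isotropicGaussianPDF (hs : s ≠ 0) :
    Integrable (isotropicGaussianPDF s : V → ℝ) :=
  .of_integral_ne_zero (by rw [integral_isotropicGaussianPDF hs]; exact one_ne_zero)

end Gaussian

theorem expected_loss_KL_bound_general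
    (K : ℕ) (α b σ σ₀ C : ℝ)
    (hα : 0 < α) (hb : 0 < b) (hσ : 0 < σ) (hσ₀ : 0 < σ₀) (hC : 0 < C)
    (β : ℝ) (hβ : β = 2 * b / (α * σ ^ 2))
    (L : EuclideanSpace ℝ (Fin K) → ℝ) (hL : Measurable L)
    (μss : Measure (EuclideanSpace ℝ (Fin K)))
    (hμss : μss = volume.withDensity (fun W => ENNReal.ofReal (C * Real.exp (-β * L W))))
    (hprob : ∫⁻ W, ENNReal.ofReal (C * Real.exp (-β * L W)) = 1)
    (hLint : Integrable L μss)
    (hW2int : Integrable (fun W : EuclideanSpace ℝ (Fin K) => ‖W‖ ^ 2) μss) :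
    (1 / (K : ℝ)) * ∫ W, L W ∂μss ≤
      (α * σ ^ 2 / (2 * b * K)) *
        ((K / 2) * Real.log (2 * π * σ₀ ^ 2) + Real.log C +
          (∫ W, ‖W‖ ^ 2 ∂μss) / (2 * σ₀ ^ 2)) := by
  subst hμss
  set μss := volume.withDensity fun W => ENNReal.ofReal (C * exp (-β * L W))
  have : IsProbabilityMeasure μss :=
    ⟨by rw [withDensity_apply _ MeasurableSet.univ, setLIntegral_univ, hprob]⟩
  have hlog_p : ∀ W, log (C * exp (-β * L W)) = log C - β * L W := fun W => by
    rw [log_mul hC.ne' (exp_pos _).ne', log_exp, neg_mul, sub_eq_add_neg]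
  have hlog_p₀ : ∀ W : EuclideanSpace ℝ (Fin K), log (isotropicGaussianPDF σ₀ W) =
      -(K / 2) * log (2 * π * σ₀ ^ 2) - ‖W‖ ^ 2 / (2 * σ₀ ^ 2) := fun W => by
    rw [log_isotropicGaussianPDF hσ₀.ne', finrank_euclideanSpace_fin]
  have hgibbs := integral_log_le_integral_log_density (f := fun W => C * exp (-β * L W))
    (by fun_prop) (fun W => by positivity) (isotropicGaussianPDF_pos hσ₀.ne')
    (integrable_isotropicGaussianPDF hσ₀.ne') (integral_isotropicGaussianPDF hσ₀.ne').le
    (by simp only [hlog_p]; exact (integrable_const _).sub (hLint.const_mul β))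
    (by simp only [hlog_p₀]; exact (integrable_const _).sub (hW2int.div_const _))
  simp only [hlog_p, hlog_p₀] at hgibbs
  rw [integral_sub (integrable_const _) (hW2int.div_const _),
    integral_sub (integrable_const _) (hLint.const_mul β), integral_const, integral_const,
    integral_div, integral_const_mul, probReal_univ, one_smul, one_smul] at hgibbs
  have hβ_pos : 0 < β := by rw [hβ]; positivity
  rw [show α * σ ^ 2 / (2 * b * K) = 1 / K * β⁻¹ by rw [hβ, inv_div]; ring, mul_assoc]
  gcongr
  rw [inv_mul_eq_div, le_div_iff₀ hβ_pos]
  linarith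

/-- **Proposition 1.** For the quasi-steady-state Gibbs measure `μ_ss` with density
`p_ss(W) = C · exp(−β·L(W))`, `β = 2b/(ασ²)`, the averaged expected loss is bounded by
an expression in the Gaussian initialization variance `σ₀²`. -/
theorem expected_loss_KL_bound
    (K : ℕ) (hK : 0 < K) (α b σ σ₀ C : ℝ)
    (hα : 0 < α) (hb : 0 < b) (hσ : 0 < σ) (hσ₀ : 0 < σ₀) (hC : 0 < C)
    (β : ℝ) (hβ : β = 2 * b / (α * σ ^ 2))
    (L : EuclideanSpace ℝ (Fin K) → ℝ) (hL : Measurable L)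
    (μss : Measure (EuclideanSpace ℝ (Fin K)))
    (hμss : μss = volume.withDensity (fun W => ENNReal.ofReal (C * Real.exp (-β * L W))))
    (hprob : ∫⁻ W, ENNReal.ofReal (C * Real.exp (-β * L W)) = 1)
    (hLint : Integrable L μss)
    (hW2int : Integrable (fun W : EuclideanSpace ℝ (Fin K) => ‖W‖ ^ 2) μss) :
    (1 / (K : ℝ)) * ∫ W, L W ∂μss ≤
      (α * σ ^ 2 / (2 * b * K)) *
        ((K / 2) * Real.log (2 * π * σ₀ ^ 2) + Real.log C +
          (∫ W, ‖W‖ ^ 2 ∂μss) / (2 * σ₀ ^ 2)) :=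
  expected_loss_KL_bound_general K α b σ σ₀ C hα hb hσ hσ₀ hC β hβ L hL μss hμss hprob hLint hW2int
end

section
/- Let K be a positive integer, let α, b, σ, C be positive real numbers, and set β = 2b/(ασ²). Let L : ℝ^K → ℝ be measurable such that p_ss(W) = C·exp(−β·L(W)) is a probability density with respect to Lebesgue measure on ℝ^K, and assume L and W ↦ ‖W‖² are integrable with respect to the probability measure μ_ss with density p_ss, with A := ∫ ‖W‖² dμ_ss > 0. Then, choosing the initialization variance σ₀² = A/K (the optimal choice), one has (1/K)·∫ L dμ_ss ≤ (ασ²/(2bK))·[ (K/2)·log(2π e · A/K) + log C ]. -/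
/-!
Gibbs' inequality `∫ log q dμ ≤ ∫ log p dμ`, for `μ = p · volume` and any probability density
`q`, applied to the centred Gaussian density `q` of variance `s` per coordinate, gives
`-∫ log p dμ ≤ (K/2)·log(2πs) + A/(2s)`. The choice `s = A/K` minimises the right-hand side, which
becomes `(K/2)·log(2πe·A/K)`. For the Gibbs density `log p = log C - β L`, so dividing by `βK`
yields the bound.
-/

open MeasureTheory Real

theorem integral_log_le_integral_log_density_s1 {X : Type*} [MeasurableSpace X] {μ ν : Measure X}
    [IsProbabilityMeasure μ] {p q : X → ℝ} (hp : Measurable p) (hp_pos : ∀ x, 0 < p x)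
    (hμ : μ = ν.withDensity fun x => ENNReal.ofReal (p x)) (hq_pos : ∀ x, 0 < q x)
    (hq : Integrable q ν) (hq_le : ∫ x, q x ∂ν ≤ 1)
    (hlogp : Integrable (fun x => log (p x)) μ) (hlogq : Integrable (fun x => log (q x)) μ) :
    ∫ x, log (q x) ∂μ ≤ ∫ x, log (p x) ∂μ := by
  have hdens : Measurable fun x => ENNReal.ofReal (p x) := hp.ennreal_ofReal
  have hfin : ∀ᵐ x ∂ν, ENNReal.ofReal (p x) < ⊤ := .of_forall fun _ => ENNReal.ofReal_lt_top
  have hweight : ∀ x, (ENNReal.ofReal (p x)).toReal • (q x / p x) = q x := fun x => by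
    rw [ENNReal.toReal_ofReal (hp_pos x).le, smul_eq_mul, mul_div_cancel₀ _ (hp_pos x).ne']
  have hratio : Integrable (fun x => q x / p x) μ := by
    rw [hμ, integrable_withDensity_iff_integrable_smul' hdens hfin]
    simpa only [hweight] using hq
  have hratio_le : ∫ x, q x / p x ∂μ ≤ 1 := by
    rwa [hμ, integral_withDensity_eq_integral_toReal_smul hdens hfin,
      integral_congr_ae (.of_forall hweight)]
  have hpointwise : ∀ x, log (q x) - log (p x) ≤ q x / p x - 1 := fun x => by
    rw [← log_div (hq_pos x).ne' (hp_pos x).ne']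
    exact log_le_sub_one_of_pos (div_pos (hq_pos x) (hp_pos x))
  have hmono := integral_mono (μ := μ) (f := fun x => log (q x) - log (p x))
    (g := fun x => q x / p x - 1) (hlogq.sub hlogp) (hratio.sub (integrable_const 1)) hpointwise
  rw [integral_sub hlogq hlogp, integral_sub hratio (integrable_const 1), integral_const,
    probReal_univ, one_smul] at hmono
  linarith

section GaussianComparison

variable {V : Type*} [NormedAddCommGroup V] [InnerProductSpace ℝ V] {s : ℝ}

noncomputable def gaussianDensity (s : ℝ) (x : V) : ℝ :=
  (2 * π * s) ^ (-(Module.finrank ℝ V / 2 : ℝ)) * exp (-(2 * s)⁻¹ * ‖x‖ ^ 2)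

lemma gaussianDensity_pos (hs : 0 < s) (x : V) : 0 < gaussianDensity s x := by
  unfold gaussianDensity; positivity

lemma log_gaussianDensity (hs : 0 < s) (x : V) :
    log (gaussianDensity s x) =
      -(Module.finrank ℝ V / 2 : ℝ) * log (2 * π * s) - (2 * s)⁻¹ * ‖x‖ ^ 2 := by
  rw [gaussianDensity, log_mul (by positivity) (exp_pos _).ne', log_rpow (by positivity), log_exp]
  ring

variable [FiniteDimensional ℝ V] [MeasurableSpace V] [BorelSpace V]

lemma integral_gaussianDensity (hs : 0 < s) : ∫ x : V, gaussianDensity s x = 1 := by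
  have h2πs : 0 < 2 * π * s := by positivity
  simp only [gaussianDensity]
  rw [integral_const_mul,
    GaussianFourier.integral_rexp_neg_mul_sq_norm (inv_pos.2 (by positivity : 0 < 2 * s)),
    div_inv_eq_mul, show π * (2 * s) = 2 * π * s by ring, ← rpow_add h2πs, neg_add_cancel,
    rpow_zero]

lemma integrable_gaussianDensity (hs : 0 < s) : Integrable (gaussianDensity (V := V) s) :=
  Integrable.of_integral_ne_zero (by rw [integral_gaussianDensity hs]; exact one_ne_zero)

theorem integral_log_density_ge_of_second_moment {μ : Measure V} [IsProbabilityMeasure μ]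
    {p : V → ℝ} (hp : Measurable p) (hp_pos : ∀ x, 0 < p x)
    (hμ : μ = volume.withDensity fun x => ENNReal.ofReal (p x))
    (hlogp : Integrable (fun x => log (p x)) μ) (hsq : Integrable (fun x => ‖x‖ ^ 2) μ)
    (hn : 0 < Module.finrank ℝ V) (hm : 0 < ∫ x, ‖x‖ ^ 2 ∂μ) :
    -(Module.finrank ℝ V / 2 : ℝ) *
        log (2 * π * exp 1 * ((∫ x, ‖x‖ ^ 2 ∂μ) / Module.finrank ℝ V)) ≤
      ∫ x, log (p x) ∂μ := by
  set m := ∫ x, ‖x‖ ^ 2 ∂μ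
  set n : ℝ := (Module.finrank ℝ V : ℝ)
  -- `s = m / n` minimises `-∫ log (gaussianDensity s) ∂μ = (n/2)·log(2πs) + m/(2s)` over `s`
  have hs : 0 < m / n := div_pos hm (Nat.cast_pos.2 hn)
  have hlog_gauss : Integrable (fun x => log (gaussianDensity (m / n) x)) μ := by
    simp_rw [log_gaussianDensity hs]
    exact (integrable_const _).sub (hsq.const_mul _)
  have hgibbs := integral_log_le_integral_log_density_s1 hp hp_pos hμ (gaussianDensity_pos hs)
    (integrable_gaussianDensity hs) (integral_gaussianDensity hs).le hlogp hlog_gauss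
  rw [integral_congr_ae (.of_forall (log_gaussianDensity hs)),
    integral_sub (integrable_const _) (hsq.const_mul _), integral_const, integral_const_mul,
    probReal_univ, one_smul] at hgibbs
  have hlog_split : log (2 * π * exp 1 * (m / n)) = log (2 * π * (m / n)) + 1 := by
    rw [mul_right_comm, log_mul (by positivity) (exp_pos 1).ne', log_exp]
  have hquad : (2 * (m / n))⁻¹ * m = n / 2 := by field_simp
  rw [hlog_split]
  linarith

end GaussianComparison

/-- **Theorem 2.** Choosing the optimal initialization variance `σ₀² = A/K`, where
`A = ∫ ‖W‖² dμ_ss` is the steady-state second moment, the Kullback–Leibler bound on the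
averaged expected loss becomes `(ασ²/(2bK))·[(K/2)·log(2πe·A/K) + log C]`. -/
theorem expected_loss_optimal_initialization_bound
    (K : ℕ) (hK : 0 < K) (α b σ C : ℝ)
    (hα : 0 < α) (hb : 0 < b) (hσ : 0 < σ) (hC : 0 < C)
    (β : ℝ) (hβ : β = 2 * b / (α * σ ^ 2))
    (L : EuclideanSpace ℝ (Fin K) → ℝ) (hL : Measurable L)
    (μss : Measure (EuclideanSpace ℝ (Fin K)))
    (hμss : μss = volume.withDensity (fun W => ENNReal.ofReal (C * Real.exp (-β * L W))))
    (hprob : ∫⁻ W, ENNReal.ofReal (C * Real.exp (-β * L W)) = 1)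
    (hLint : Integrable L μss)
    (hW2int : Integrable (fun W : EuclideanSpace ℝ (Fin K) => ‖W‖ ^ 2) μss)
    (A : ℝ) (hA : A = ∫ W, ‖W‖ ^ 2 ∂μss) (hApos : 0 < A) :
    (1 / (K : ℝ)) * ∫ W, L W ∂μss ≤
      (α * σ ^ 2 / (2 * b * K)) *
        ((K / 2) * Real.log (2 * π * Real.exp 1 * (A / K)) + Real.log C) := by
  have : IsProbabilityMeasure μss :=
    ⟨by rw [hμss, withDensity_apply _ .univ, setLIntegral_univ, hprob]⟩
  have hlog_density : ∀ W, log (C * exp (-β * L W)) = log C - β * L W := fun W => by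
    rw [log_mul hC.ne' (exp_pos _).ne', log_exp, neg_mul, sub_eq_add_neg]
  have hlog_int : Integrable (fun W => log (C * exp (-β * L W))) μss :=
    ((integrable_const _).sub (hLint.const_mul β)).congr (.of_forall fun W => (hlog_density W).symm)
  have hentropy := integral_log_density_ge_of_second_moment (by fun_prop) (fun W => by positivity)
    hμss hlog_int hW2int (by simpa using hK) (hA ▸ hApos)
  rw [finrank_euclideanSpace_fin, integral_congr_ae (.of_forall hlog_density),
    integral_sub (integrable_const _) (hLint.const_mul β), integral_const, integral_const_mul,
    probReal_univ, one_smul, ← hA] at hentropy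
  have hKpos : (0 : ℝ) < K := Nat.cast_pos.2 hK
  have hscale : α * σ ^ 2 / (2 * b * K) * β = 1 / K := by rw [hβ]; field_simp
  rw [← hscale, mul_assoc]
  gcongr
  linarith
end
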